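/- Let n be a positive integer, δ ∈ {0, 1}, and β ∈ ℂ with |β| ≥ (R₀ + ω₀^δ)(1 + e²)^{(3−n)/2}/(√2 e)^{1−n}. If p ∈ ℋ satisfies p(z) ≠ 0 on 𝔻 and (p(z))^δ + β z p′(z)/(p(z))^n ≺ 𝔅(z), then p(z) ≺ 𝔅(z). -/

import Mathlib

open Complex

noncomputable section

/-- The open unit disk in the complex plane. -/
def unitDisk : Set ℂ := Metric.ball 0 1

/-- `f` is subordinate to `g` on the unit disk: there is an analytic Schwarz function `w`
with `w 0 = 0`, `|w z| < 1` on the disk, and `f = g ∘ w` on the disk. -/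
def Subord (f g : ℂ → ℂ) : Prop :=
  ∃ w : ℂ → ℂ, DifferentiableOn ℂ w unitDisk ∧ w 0 = 0 ∧
    (∀ z ∈ unitDisk, ‖w z‖ < 1) ∧ ∀ z ∈ unitDisk, f z = g (w z)

/-- The function `𝔅(z) = √(1 + tanh z)` (principal branch). -/
def bean (z : ℂ) : ℂ := (1 + Complex.tanh z) ^ ((1 : ℂ) / 2)

/-- `R₀ = e √(2/(e² - 1))`. -/
def R₀ : ℝ := Real.exp 1 * Real.sqrt (2 / (Real.exp 1 ^ 2 - 1))

/-- `ω₀ = max_{θ ∈ [0, 2π)} |𝔅(e^{iθ})|`. -/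
def ω₀ : ℝ :=
  sSup ((fun θ : ℝ => ‖bean (Complex.exp (θ * Complex.I))‖) '' Set.Ico 0 (2 * Real.pi))

/-!
The subordination hypothesis says that `p^δ + β z p'/p^n = 𝔅 ∘ w` for a Schwarz function `w`, and
`|𝔅| ≤ 2` on the closed unit disk. Hence on any disk `|z| < m` on which `|p - 1| ≤ ρ`, the function
`β z p'/p^n` is bounded by `3 + ρ`; the Schwarz lemma bounds `β p'/p^n` by `(3 + ρ)/m`, and the mean
value theorem gives `|β| |p - 1| ≤ (3 + ρ)(1 + ρ)^n` on that disk. The lower bound on `|β|` makes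
the estimate `|p - 1| ≤ 1/5` self-improving, so a continuity argument in the radius spreads it over
the whole unit disk. Finally, once `|p - 1| ≤ 1/5`, the map `w = artanh (p² - 1)` is a Schwarz
function with `𝔅 ∘ w = p`, because `𝔅² = 1 + tanh`.
-/

open Metric Topology

namespace Complex

lemma cosh_re (z : ℂ) : (cosh z).re = Real.cosh z.re * Real.cos z.im := by
  simp only [cosh, div_ofNat_re, add_re, exp_re, neg_re, Real.exp_neg, neg_im, Real.cos_neg,
    Real.cosh_eq]
  ring

lemma norm_one_add_tanh_le_four {ζ : ℂ} (hζ : ‖ζ‖ ≤ 1) : ‖1 + tanh ζ‖ ≤ 4 := by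
  have hcos : 1 / 2 ≤ Real.cos ζ.im := by
    have h := Real.one_sub_sq_div_two_le_cos (x := ζ.im)
    have : ζ.im ^ 2 ≤ 1 := by
      rw [sq_le_one_iff_abs_le_one]; exact (abs_im_le_norm ζ).trans hζ
    linarith
  have hre : Real.exp ζ.re * Real.cos ζ.im / 2 ≤ (cosh ζ).re := by
    rw [cosh_re, Real.cosh_eq]
    nlinarith [Real.exp_pos (-ζ.re)]
  have hpos : 0 < ‖cosh ζ‖ := by
    have := (re_le_norm (cosh ζ)); nlinarith [Real.exp_pos ζ.re]
  have hone : 1 + tanh ζ = exp ζ / cosh ζ := by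
    rw [tanh_eq_sinh_div_cosh, ← cosh_add_sinh]
    field_simp [norm_pos_iff.1 hpos]
  rw [hone, norm_div, norm_exp, div_le_iff₀ hpos]
  nlinarith [re_le_norm (cosh ζ), Real.exp_pos ζ.re]

def artanh (z : ℂ) : ℂ := log ((1 + z) / (1 - z)) / 2

lemma tanh_artanh {u : ℂ} (h1 : u ≠ 1) (h2 : u ≠ -1) : tanh (artanh u) = u := by
  have h1' : 1 - u ≠ 0 := sub_ne_zero.2 h1.symm
  have h2' : 1 + u ≠ 0 := by rwa [add_comm, ← sub_neg_eq_add, sub_ne_zero]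
  set E := exp (artanh u)
  have hE : E ^ 2 = (1 + u) / (1 - u) := by
    rw [← exp_nat_mul, artanh, Nat.cast_ofNat, mul_div_cancel₀ _ two_ne_zero,
      exp_log (div_ne_zero h2' h1')]
  have hE1 : E ^ 2 + 1 ≠ 0 := by
    rw [hE, div_add_one h1', show 1 + u + (1 - u) = 2 by ring]
    exact div_ne_zero two_ne_zero h1'
  rw [tanh_eq_sinh_div_cosh, sinh, cosh, exp_neg]
  field_simp
  change (E ^ 2 - 1) / (E ^ 2 + 1) = u
  rw [div_eq_iff hE1, hE]
  field_simp
  ring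

lemma re_one_add_div_one_sub_pos {u : ℂ} (hu : ‖u‖ < 1) : 0 < ((1 + u) / (1 - u)).re := by
  have h1 : 1 - u ≠ 0 := fun h => by simp [← eq_of_sub_eq_zero h] at hu
  have hnum : (1 + u).re * (1 - u).re + (1 + u).im * (1 - u).im = 1 - ‖u‖ ^ 2 := by
    rw [Complex.sq_norm, normSq_apply]
    simp only [add_re, one_re, sub_re, add_im, one_im, zero_add, sub_im, zero_sub, mul_neg]
    ring
  rw [div_re, ← add_div, hnum]
  exact div_pos (by nlinarith [norm_nonneg u]) (normSq_pos.2 h1)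

lemma differentiableAt_artanh {u : ℂ} (hu : ‖u‖ < 1) : DifferentiableAt ℂ artanh u := by
  have h1 : 1 - u ≠ 0 := fun h => by simp [← eq_of_sub_eq_zero h] at hu
  exact (((differentiableAt_const 1).add differentiableAt_id).div
    ((differentiableAt_const 1).sub differentiableAt_id) h1).clog
    (Or.inl (re_one_add_div_one_sub_pos hu)) |>.div_const 2

lemma norm_artanh_lt_one {u : ℂ} (hu : ‖u‖ ≤ 1 / 2) : ‖artanh u‖ < 1 := by
  set v := (1 + u) / (1 - u)
  have hnum : ‖1 + u‖ ≤ 3 / 2 := (norm_add_le _ _).trans (by rw [norm_one]; linarith)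
  have hnum' : 1 / 2 ≤ ‖1 + u‖ := by linarith [norm_sub_le_norm_add (1 : ℂ) u, norm_one (α := ℂ)]
  have hden : ‖1 - u‖ ≤ 3 / 2 := (norm_sub_le _ _).trans (by rw [norm_one]; linarith)
  have hden' : 1 / 2 ≤ ‖1 - u‖ := by linarith [norm_sub_norm_le (1 : ℂ) u, norm_one (α := ℂ)]
  have hv : ‖v‖ ≤ 3 := by
    rw [norm_div, div_le_iff₀ (by linarith)]; linarith
  have hv' : 3⁻¹ ≤ ‖v‖ := by
    rw [norm_div, le_div_iff₀ (by linarith)]; linarith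
  have hlog : |Real.log ‖v‖| ≤ Real.log 3 := by
    rw [abs_le, ← Real.log_inv]
    exact ⟨Real.log_le_log (by norm_num) hv', Real.log_le_log (by linarith) hv⟩
  have harg : |arg v| ≤ Real.pi / 2 :=
    abs_arg_le_pi_div_two_iff.2 (re_one_add_div_one_sub_pos (by linarith)).le
  have hsq : ‖log v‖ ^ 2 = Real.log ‖v‖ ^ 2 + arg v ^ 2 := by
    rw [Complex.sq_norm, normSq_apply, log_re, log_im]; ring
  have hlog3 := Real.log_three_lt_d9
  have hpi := Real.pi_lt_d2
  have : ‖log v‖ ^ 2 < 2 ^ 2 := by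
    rw [hsq]
    nlinarith [sq_abs (Real.log ‖v‖), sq_abs (arg v), abs_nonneg (Real.log ‖v‖), abs_nonneg (arg v),
      Real.pi_pos]
  rw [artanh, norm_div, RCLike.norm_ofNat, div_lt_one two_pos]
  exact lt_of_pow_lt_pow_left₀ 2 zero_le_two this

end Complex

lemma norm_bean_le_two {ζ : ℂ} (hζ : ‖ζ‖ ≤ 1) : ‖bean ζ‖ ≤ 2 := by
  rw [bean, show (1 / 2 : ℂ) = ((1 / 2 : ℝ) : ℂ) by norm_num, norm_cpow_real]
  calc ‖1 + tanh ζ‖ ^ (1 / 2 : ℝ) ≤ 4 ^ (1 / 2 : ℝ) := by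
        gcongr; exact norm_one_add_tanh_le_four hζ
    _ = 2 := by
        rw [show (4 : ℝ) = 2 ^ (2 : ℝ) by norm_num, ← Real.rpow_mul (by norm_num)]; norm_num

lemma one_le_norm_bean_one : 1 ≤ ‖bean 1‖ := by
  have htanh : 0 ≤ Real.tanh 1 := by
    rw [Real.tanh_eq_sinh_div_cosh]
    exact div_nonneg (Real.sinh_nonneg_iff.2 zero_le_one) (Real.cosh_pos 1).le
  have hbean : bean 1 = ((1 + Real.tanh 1 : ℝ) : ℂ) ^ ((1 / 2 : ℝ) : ℂ) := by
    simp [bean, ofReal_tanh]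
  rw [hbean, norm_cpow_real, norm_real, Real.norm_of_nonneg (by linarith)]
  exact Real.one_le_rpow (by linarith) (by norm_num)

lemma bean_artanh_sq_sub_one {a : ℂ} (ha : 0 < a.re) (h : ‖a ^ 2 - 1‖ < 1) :
    bean (artanh (a ^ 2 - 1)) = a := by
  have h1 : a ^ 2 - 1 ≠ 1 := fun he => by simp [he] at h
  have h2 : a ^ 2 - 1 ≠ -1 := fun he => by simp [he] at h
  rw [bean, tanh_artanh h1 h2, add_sub_cancel, one_div]
  exact sq_cpow_two_inv ha

lemma one_le_ω₀ : 1 ≤ ω₀ := by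
  have hbdd : BddAbove
      ((fun θ : ℝ => ‖bean (exp (θ * I))‖) '' Set.Ico 0 (2 * Real.pi)) := by
    refine ⟨2, ?_⟩
    rintro _ ⟨θ, -, rfl⟩
    exact norm_bean_le_two (norm_exp_ofReal_mul_I θ).le
  refine one_le_norm_bean_one.trans (le_csSup_of_le hbdd ⟨0, ⟨le_rfl, by positivity⟩, ?_⟩ le_rfl)
  simp

lemma three_halves_le_R₀ : (3 / 2 : ℝ) ≤ R₀ := by
  have he := Real.exp_one_gt_d9
  have he' := Real.exp_one_lt_d9
  have hden : 0 < Real.exp 1 ^ 2 - 1 := by nlinarith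
  have hsqrt : 3 / (2 * Real.exp 1) ≤ Real.sqrt (2 / (Real.exp 1 ^ 2 - 1)) := by
    rw [Real.le_sqrt (by positivity) (by positivity), div_pow, div_le_div_iff₀ (by positivity) hden]
    nlinarith
  calc (3 / 2 : ℝ) = Real.exp 1 * (3 / (2 * Real.exp 1)) := by field_simp
    _ ≤ R₀ := mul_le_mul_of_nonneg_left hsqrt (Real.exp_pos 1).le

lemma seventeen_mul_pow_le_threshold {n : ℕ} (hn : 0 < n) {A : ℝ} (hA : 5 / 2 ≤ A) :
    17 * (6 / 5 : ℝ) ^ n ≤ A * (1 + Real.exp 1 ^ 2) ^ ((3 - (n : ℝ)) / 2) /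
      (Real.sqrt 2 * Real.exp 1) ^ (1 - (n : ℝ)) := by
  obtain ⟨k, rfl⟩ := Nat.exists_eq_add_one_of_ne_zero hn.ne'
  set X := 1 + Real.exp 1 ^ 2
  set b := Real.sqrt 2 * Real.exp 1
  have he := Real.exp_one_gt_d9
  have hX : 0 < X := by positivity
  have hb : 0 < b := by positivity
  have hsX : 0 < Real.sqrt X := Real.sqrt_pos.2 hX
  have hratio : 6 / 5 ≤ b / Real.sqrt X := by
    have hb2 : b ^ 2 = 2 * Real.exp 1 ^ 2 := by rw [mul_pow, Real.sq_sqrt zero_le_two]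
    rw [le_div_iff₀ hsX]
    nlinarith [Real.sq_sqrt hX.le]
  have hexpr : X ^ ((3 - ((k + 1 : ℕ) : ℝ)) / 2) / b ^ (1 - ((k + 1 : ℕ) : ℝ)) =
      X * (b / Real.sqrt X) ^ k := by
    rw [Real.sqrt_eq_rpow, div_pow, ← Real.rpow_natCast (X ^ _), ← Real.rpow_mul hX.le]
    push_cast
    rw [show (3 - (k + 1 : ℝ)) / 2 = 1 - 1 / 2 * k by ring, show 1 - (k + 1 : ℝ) = -k by ring,
      Real.rpow_sub hX, Real.rpow_one, Real.rpow_neg hb.le, Real.rpow_natCast]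
    field_simp
  rw [mul_div_assoc, hexpr]
  calc 17 * (6 / 5 : ℝ) ^ (k + 1) = 20.4 * (6 / 5) ^ k := by ring
    _ ≤ (5 / 2 * 8.16) * (b / Real.sqrt X) ^ k := by gcongr; norm_num
    _ ≤ A * (X * (b / Real.sqrt X) ^ k) := by rw [← mul_assoc]; gcongr; nlinarith

lemma norm_le_div_of_norm_mul_le {g : ℂ → ℂ} {R C : ℝ} (hg : DifferentiableOn ℂ g (ball 0 R))
    (h : ∀ z ∈ ball 0 R, ‖z * g z‖ ≤ C) {z : ℂ} (hz : z ∈ ball 0 R) : ‖g z‖ ≤ C / R := by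
  have h0 : (0 : ℂ) ∈ ball 0 R := mem_ball_self (pos_of_mem_ball hz)
  have hdslope : dslope (fun x => x * g x) 0 z = g z := by
    rcases eq_or_ne z 0 with rfl | hz0
    · rw [dslope_same, deriv_fun_mul differentiableAt_fun_id
        (hg.differentiableAt (isOpen_ball.mem_nhds h0))]
      simp
    · simpa using dslope_sub_smul_of_ne g hz0
  rw [← hdslope]
  refine Complex.norm_dslope_le_div_of_mapsTo_ball (differentiableOn_id.mul hg) ?_ hz
  intro x hx
  simpa using h x hx

lemma forall_mem_ball_le_of_improvement {E : Type*} [NormedAddCommGroup E] [NormedSpace ℝ E]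
    [ProperSpace E] {f : E → ℝ} {R ρ c : ℝ} (hf : ContinuousOn f (ball 0 R)) (h0 : f 0 < ρ)
    (hc : c < ρ) (himp : ∀ m ≤ R, (∀ z ∈ ball 0 m, f z ≤ ρ) → ∀ z ∈ ball 0 m, f z ≤ c) :
    ∀ z ∈ ball 0 R, f z ≤ ρ := by
  intro z hz
  obtain ⟨b, hzb, hbR⟩ := exists_between (mem_ball_zero_iff.1 hz)
  set s := {r : ℝ | ∀ y ∈ ball (0 : E) r, f y ≤ ρ}
  have hs : IsClosed s := by
    have : s = ⋂ y : E, ({r | r ≤ ‖y‖} ∪ {_r | f y ≤ ρ}) := by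
      ext r; simp [s, imp_iff_not_or]
    rw [this]
    exact isClosed_iInter fun y => (isClosed_le continuous_id continuous_const).union isClosed_const
  have hgrow : ∀ x ∈ s ∩ Set.Ico 0 b, s ∈ 𝓝[>] x := by
    rintro x ⟨hx, hx0, hxb⟩
    have hK : closedBall (0 : E) x ⊆ ball 0 R ∩ f ⁻¹' Set.Iio ρ := by
      intro y hy
      refine ⟨closedBall_subset_ball (hxb.trans hbR) hy, ?_⟩
      rcases hx0.eq_or_lt with rfl | hx0
      · rw [closedBall_zero, Set.mem_singleton_iff] at hy
        exact hy ▸ h0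
      · have hcl : f y ≤ c := by
          refine le_on_closure (g := fun _ => c) (himp x (hxb.trans hbR).le hx)
            (hf.mono ?_) continuousOn_const (by rwa [closure_ball 0 hx0.ne'])
          rw [closure_ball 0 hx0.ne']
          exact closedBall_subset_ball (hxb.trans hbR)
        exact hcl.trans_lt hc
    obtain ⟨ε, hε, hth⟩ := (isCompact_closedBall (0 : E) x).exists_thickening_subset_open
      (hf.isOpen_inter_preimage isOpen_ball isOpen_Iio) hK
    rw [thickening_closedBall hε hx0] at hth
    filter_upwards [mem_nhdsWithin_of_mem_nhds (Iic_mem_nhds (lt_add_of_pos_left x hε))]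
      with r hr y hy
    exact ((hth (ball_subset_ball hr hy)).2).le
  exact hs.inter isClosed_Icc |>.Icc_subset_of_forall_mem_nhdsWithin (by simp [s]) hgrow
    ⟨norm_nonneg z |>.trans hzb.le, le_rfl⟩ z (mem_ball_zero_iff.2 hzb)

section Improvement

variable {n δ : ℕ} {β : ℂ} {p : ℂ → ℂ} {m C ρ : ℝ}

lemma norm_mul_deriv_le (hp : DifferentiableOn ℂ p unitDisk) (hpne : ∀ z ∈ unitDisk, p z ≠ 0)
    (hm : m ≤ 1) (hδ : δ ≤ 1)
    (hF : ∀ z ∈ ball 0 m, ‖p z ^ δ + β * (z * deriv p z) / p z ^ n‖ ≤ C)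
    (hρ : ∀ z ∈ ball 0 m, ‖p z - 1‖ ≤ ρ) {x : ℂ} (hx : x ∈ ball 0 m) :
    ‖β * deriv p x‖ ≤ (C + 1 + ρ) / m * (1 + ρ) ^ n := by
  have hsub : ball 0 m ⊆ unitDisk := ball_subset_ball hm
  have hm0 : 0 < m := pos_of_mem_ball hx
  have hρ0 : 0 ≤ ρ := (norm_nonneg _).trans (hρ x hx)
  have hC : 0 ≤ C := (norm_nonneg _).trans (hF x hx)
  have hpρ : ∀ z ∈ ball 0 m, ‖p z‖ ≤ 1 + ρ := fun z hz => by
    simpa using norm_le_of_mem_closedBall (mem_closedBall_iff_norm.2 (hρ z hz))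
  set g := fun z => β * deriv p z / p z ^ n
  have hg : DifferentiableOn ℂ g (ball 0 m) :=
    (((hp.deriv isOpen_ball).const_mul β).div (hp.pow n)
      fun z hz => pow_ne_zero n (hpne z hz)).mono hsub
  have hzg : ∀ z ∈ ball 0 m, ‖z * g z‖ ≤ C + 1 + ρ := by
    intro z hz
    have hpδ : ‖p z ^ δ‖ ≤ 1 + ρ := by
      rw [norm_pow]
      calc ‖p z‖ ^ δ ≤ (1 + ρ) ^ δ := by gcongr; exact hpρ z hz
        _ ≤ (1 + ρ) ^ 1 := pow_le_pow_right₀ (by linarith) hδ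
        _ = 1 + ρ := pow_one _
    calc ‖z * g z‖ = ‖(p z ^ δ + β * (z * deriv p z) / p z ^ n) - p z ^ δ‖ := by
          congr 1; simp only [g]; ring
      _ ≤ C + 1 + ρ := (norm_sub_le _ _).trans (by linarith [hF z hz])
  have hpx : p x ^ n ≠ 0 := pow_ne_zero n (hpne x (hsub hx))
  rw [show β * deriv p x = g x * p x ^ n by simp only [g]; field_simp, norm_mul, norm_pow]
  exact mul_le_mul (norm_le_div_of_norm_mul_le hg hzg hx)
    (pow_le_pow_left₀ (norm_nonneg _) (hpρ x hx) n) (by positivity) (by positivity)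

lemma norm_mul_norm_sub_one_le (hp : DifferentiableOn ℂ p unitDisk) (hp0 : p 0 = 1)
    (hpne : ∀ z ∈ unitDisk, p z ≠ 0) (hm : m ≤ 1) (hδ : δ ≤ 1)
    (hF : ∀ z ∈ ball 0 m, ‖p z ^ δ + β * (z * deriv p z) / p z ^ n‖ ≤ C)
    (hρ : ∀ z ∈ ball 0 m, ‖p z - 1‖ ≤ ρ) {z : ℂ} (hz : z ∈ ball 0 m) :
    ‖β‖ * ‖p z - 1‖ ≤ (C + 1 + ρ) * (1 + ρ) ^ n := by
  have hsub : ball 0 m ⊆ unitDisk := ball_subset_ball hm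
  have hm0 : 0 < m := pos_of_mem_ball hz
  have hρ0 : 0 ≤ ρ := (norm_nonneg _).trans (hρ z hz)
  have hC : 0 ≤ C := (norm_nonneg _).trans (hF z hz)
  have hdiff : ∀ x ∈ ball 0 m, DifferentiableAt ℂ p x :=
    fun x hx => hp.differentiableAt (isOpen_ball.mem_nhds (hsub hx))
  have hmvt := (convex_ball (0 : ℂ) m).norm_image_sub_le_of_norm_deriv_le
    (fun x hx => (hdiff x hx).const_mul β)
    (fun x hx => (deriv_const_mul β (hdiff x hx)).symm ▸ norm_mul_deriv_le hp hpne hm hδ hF hρ hx)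
    (mem_ball_self hm0) hz
  rw [← mul_sub, norm_mul, hp0, sub_zero] at hmvt
  calc ‖β‖ * ‖p z - 1‖ ≤ (C + 1 + ρ) / m * (1 + ρ) ^ n * ‖z‖ := hmvt
    _ ≤ (C + 1 + ρ) / m * (1 + ρ) ^ n * m := by
        gcongr
        exact (mem_ball_zero_iff.1 hz).le
    _ = (C + 1 + ρ) * (1 + ρ) ^ n := by field_simp

end Improvement

lemma subord_bean_of_norm_sub_one_le {p : ℂ → ℂ} (hp : DifferentiableOn ℂ p unitDisk)
    (hp0 : p 0 = 1) (h : ∀ z ∈ unitDisk, ‖p z - 1‖ ≤ 1 / 5) : Subord p bean := by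
  have hsq : ∀ z ∈ unitDisk, ‖p z ^ 2 - 1‖ ≤ 1 / 2 := by
    intro z hz
    have h1 := h z hz
    calc ‖p z ^ 2 - 1‖ = ‖p z - 1‖ * ‖(p z - 1) + 2‖ := by rw [← norm_mul]; ring_nf
      _ ≤ 1 / 5 * (1 / 5 + 2) := by
          gcongr
          exact (norm_add_le _ _).trans (by norm_num; linarith)
      _ ≤ 1 / 2 := by norm_num
  have hre : ∀ z ∈ unitDisk, 0 < (p z).re := by
    intro z hz
    have := (abs_re_le_norm (p z - 1)).trans (h z hz)
    rw [sub_re, one_re] at this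
    linarith [abs_le.1 this]
  refine ⟨fun z => artanh (p z ^ 2 - 1), fun z hz => ?_, by simp [hp0, artanh],
    fun z hz => norm_artanh_lt_one (hsq z hz),
    fun z hz => (bean_artanh_sq_sub_one (hre z hz) (by linarith [hsq z hz])).symm⟩
  exact (differentiableAt_artanh (by linarith [hsq z hz])).comp_differentiableWithinAt z
    (((hp z hz).pow 2).sub_const 1)

theorem stmt_5 (n : ℕ) (hn : 0 < n) (δ : ℕ) (hδ : δ = 0 ∨ δ = 1) (β : ℂ)
    (hβ : (R₀ + ω₀ ^ δ) * (1 + Real.exp 1 ^ 2) ^ ((3 - (n : ℝ)) / 2) /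
        (Real.sqrt 2 * Real.exp 1) ^ (1 - (n : ℝ)) ≤ ‖β‖)
    (p : ℂ → ℂ) (hp : DifferentiableOn ℂ p unitDisk) (hp0 : p 0 = 1)
    (hpne : ∀ z ∈ unitDisk, p z ≠ 0)
    (hsub : Subord (fun z => p z ^ δ + β * (z * deriv p z) / p z ^ n) bean) :
    Subord p bean := by
  obtain ⟨w, -, -, hw, hF⟩ := hsub
  have hFbound : ∀ z ∈ unitDisk, ‖p z ^ δ + β * (z * deriv p z) / p z ^ n‖ ≤ 2 := by
    intro z hz
    exact (congrArg norm (hF z hz)).trans_le (norm_bean_le_two (hw z hz).le)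
  have hA : 5 / 2 ≤ R₀ + ω₀ ^ δ := by
    linarith [three_halves_le_R₀, one_le_pow₀ (n := δ) one_le_ω₀]
  have hβ17 : 17 * (6 / 5 : ℝ) ^ n ≤ ‖β‖ := (seventeen_mul_pow_le_threshold hn hA).trans hβ
  refine subord_bean_of_norm_sub_one_le hp hp0
    (forall_mem_ball_le_of_improvement (f := fun z => ‖p z - 1‖) (c := 16 / 85)
      (hp.continuousOn.sub continuousOn_const).norm (by simp [hp0]) (by norm_num) ?_)
  -- `(2 + 1 + 1/5) (6/5)^n / (17 (6/5)^n) = 16/85 < 1/5`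
  intro m hm hρ z hz
  have key := norm_mul_norm_sub_one_le hp hp0 hpne hm (by omega : δ ≤ 1)
    (fun z hz => hFbound z (ball_subset_ball hm hz)) hρ hz
  norm_num at key
  have hpow : 0 < (6 / 5 : ℝ) ^ n := by positivity
  nlinarith [norm_nonneg (p z - 1)]
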